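/- arXiv:1504.02514 — 3 statements merged into one kernel-verified Lean document; each statement's English description precedes it below -/
import Mathlib

section
/- Key unanimity-transfer lemma: if an anonymous voting rule is pairwise responsive and satisfies ε-super-weak unanimity, then it satisfies ε-strong unanimity; i.e., for every candidate x and every profile in which every voter ranks x first, x is selected with probability at least 1 − ε. -/
open Finset

variable {C : Type*}

/-- A preference ordering on `C`: a ranking of the candidates, where a higher
rank means more preferred. -/
abbrev Pref (C : Type*) [Fintype C] := C ≃ Fin (Fintype.card C)

/-- `x` is strictly preferred to `y` in `P`. -/
def PrefOver [Fintype C] (P : Pref C) (x y : C) : Prop := P y < P x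

/-- The top (most preferred) candidate of `P`. -/
def topC [Fintype C] [Nonempty C] (P : Pref C) : C :=
  P.symm ⟨Fintype.card C - 1, Nat.sub_lt Fintype.card_pos Nat.one_pos⟩

/-- `x` is directly above `y` in `P`. -/
def DirAbove [Fintype C] (P : Pref C) (x y : C) : Prop := (P x : ℕ) = (P y : ℕ) + 1

/-- The ordering `P` with candidates `x` and `y` swapped. -/
def swapIn [Fintype C] [DecidableEq C] (P : Pref C) (x y : C) : Pref C :=
  (Equiv.swap x y).trans P

/-- A (randomized) voting rule: nonnegative selection probabilities summing to 1. -/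
def IsVotingRule [Fintype C] {n : ℕ} (v : (Fin n → Pref C) → C → ℝ) : Prop :=
  (∀ Pvec x, 0 ≤ v Pvec x) ∧ (∀ Pvec, ∑ x, v Pvec x = 1)

def Anonymous [Fintype C] {n : ℕ} (v : (Fin n → Pref C) → C → ℝ) : Prop :=
  ∀ (σ : Equiv.Perm (Fin n)) (Pvec : Fin n → Pref C) (x : C), v (Pvec ∘ σ) x = v Pvec x

/-- Expected utility of a distribution `d` over candidates under utility `u`. -/
def EU [Fintype C] (u : C → ℝ) (d : C → ℝ) : ℝ := ∑ x, u x * d x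

/-- A `[0,1]`-valued utility function consistent with the ordering `P`. -/
def Consistent [Fintype C] (u : C → ℝ) (P : Pref C) : Prop :=
  (∀ x, u x ∈ Set.Icc (0 : ℝ) 1) ∧ ∀ x y, u x > u y ↔ PrefOver P x y

/-- The random dictatorship voting rule. -/
noncomputable def vdict [Fintype C] [Nonempty C] [DecidableEq C] {n : ℕ}
    (Pvec : Fin n → Pref C) (x : C) : ℝ :=
  ((Finset.univ.filter (fun i => topC (Pvec i) = x)).card : ℝ) / n

def StrategyProofRule [Fintype C] {n : ℕ} (v : (Fin n → Pref C) → C → ℝ) : Prop :=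
  ∀ (i : Fin n) (Pvec : Fin n → Pref C) (P' : Pref C) (u : C → ℝ),
    Consistent u (Pvec i) → EU u (v (Function.update Pvec i P')) ≤ EU u (v Pvec)

def IsBelief [Fintype C] [DecidableEq C] (φ : Pref C → ℝ) : Prop :=
  (∀ P, 0 ≤ φ P) ∧ ∑ P, φ P = 1

/-- The profile where voter `i` submits `Pi` and the other voters submit `Q`. -/
def profileWith [Fintype C] {n : ℕ} (i : Fin n) (Q : {j : Fin n // j ≠ i} → Pref C)
    (Pi : Pref C) : Fin n → Pref C :=
  fun j => if h : j = i then Pi else Q ⟨j, h⟩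

/-- Expected utility for voter `i` reporting `Pi` when the others' orderings are
i.i.d. with distribution `φ`. -/
noncomputable def beliefEU [Fintype C] [DecidableEq C] {n : ℕ}
    (v : (Fin n → Pref C) → C → ℝ) (i : Fin n) (φ : Pref C → ℝ) (u : C → ℝ)
    (Pi : Pref C) : ℝ :=
  ∑ Q : {j : Fin n // j ≠ i} → Pref C, (∏ j, φ (Q j)) * EU u (v (profileWith i Q Pi))

/-- Strategy-proofness with respect to a single i.i.d. belief `φ`. -/
def SPwrtBelief [Fintype C] [DecidableEq C] {n : ℕ}
    (v : (Fin n → Pref C) → C → ℝ) (φ : Pref C → ℝ) : Prop :=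
  ∀ (i : Fin n) (Pi Pi' : Pref C) (u : C → ℝ),
    Consistent u Pi → beliefEU v i φ u Pi' ≤ beliefEU v i φ u Pi

/-- Weak strategy-proofness: strategy-proofness w.r.t. all i.i.d. beliefs. -/
def WeaklySP [Fintype C] [DecidableEq C] {n : ℕ}
    (v : (Fin n → Pref C) → C → ℝ) : Prop :=
  ∀ φ : Pref C → ℝ, IsBelief φ → SPwrtBelief v φ

def ParetoEff [Fintype C] {n : ℕ} (ε : ℝ) (v : (Fin n → Pref C) → C → ℝ) : Prop :=
  ∀ (x y : C) (Pvec : Fin n → Pref C), (∀ i, PrefOver (Pvec i) x y) → v Pvec y ≤ ε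

def StrongUnanimity [Fintype C] [Nonempty C] {n : ℕ} (ε : ℝ)
    (v : (Fin n → Pref C) → C → ℝ) : Prop :=
  ∀ (x : C) (Pvec : Fin n → Pref C), (∀ i, topC (Pvec i) = x) → 1 - ε ≤ v Pvec x

def WeakUnanimity [Fintype C] [Nonempty C] {n : ℕ} (ε : ℝ)
    (v : (Fin n → Pref C) → C → ℝ) : Prop :=
  ∀ P : Pref C, 1 - ε ≤ v (fun _ => P) (topC P)

def SuperWeakUnanimity [Fintype C] [Nonempty C] {n : ℕ} (ε : ℝ)
    (v : (Fin n → Pref C) → C → ℝ) : Prop :=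
  ∀ x : C, ∃ Pvec : Fin n → Pref C, (∀ i, topC (Pvec i) = x) ∧ 1 - ε ≤ v Pvec x

def PairwiseResponsive [Fintype C] [DecidableEq C] {n : ℕ}
    (v : (Fin n → Pref C) → C → ℝ) : Prop :=
  ∀ (Pvec : Fin n → Pref C) (i : Fin n) (x y z : C),
    DirAbove (Pvec i) x y → z ≠ x → z ≠ y →
      v (Function.update Pvec i (swapIn (Pvec i) x y)) z = v Pvec z

def PairwiseIsolated [Fintype C] [DecidableEq C] {n : ℕ}
    (v : (Fin n → Pref C) → C → ℝ) : Prop :=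
  ∀ (i : Fin n) (Pvec Pvec' : Fin n → Pref C) (x y : C),
    DirAbove (Pvec i) x y → Pvec' i = Pvec i →
    (∀ j, j ≠ i → (PrefOver (Pvec j) x y ↔ PrefOver (Pvec' j) x y)) →
    v (Function.update Pvec' i (swapIn (Pvec' i) x y)) y - v Pvec' y =
      v (Function.update Pvec i (swapIn (Pvec i) x y)) y - v Pvec y

/-- The ordering `e` with candidate `x` moved to the top (relative order of the
other candidates preserved). -/
def moveToTop [Fintype C] [DecidableEq C] (e : Pref C) (x : C) : Pref C :=
  e.trans ((Fin.revPerm.trans (Fin.cycleRange (e x).rev)).trans Fin.revPerm)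

/-- The ordering `e` with candidate `x` moved to the bottom (relative order of
the other candidates preserved). -/
def moveToBot [Fintype C] [DecidableEq C] (e : Pref C) (x : C) : Pref C :=
  e.trans (Fin.cycleRange (e x))

/-- The canonical profile `P⃗^{x,j}`: the first `j` voters rank `x` on top and
the remaining voters rank `x` on the bottom, with the other candidates ordered
according to the fixed ordering `e`. -/
def canonProfile [Fintype C] [DecidableEq C] {n : ℕ} (e : Pref C) (x : C) (j : ℕ) :
    Fin n → Pref C :=
  fun i => if (i : ℕ) < j then moveToTop e x else moveToBot e x

/-- `v'(x,j)`: the selection probability of `x` on the canonical profile with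
exactly `j` voters ranking `x` first. -/
def vTopCount [Fintype C] [DecidableEq C] {n : ℕ} (v : (Fin n → Pref C) → C → ℝ)
    (e : Pref C) (x : C) (j : ℕ) : ℝ :=
  v (canonProfile e x j) x

section Aux
set_option linter.unusedSectionVars false
variable [Fintype C] [DecidableEq C]

/-- The set of inversions between two orderings. -/
def invSet (P Q : Pref C) : Finset (C × C) :=
  Finset.univ.filter (fun p => P p.1 < P p.2 ∧ Q p.2 < Q p.1)

lemma mem_invSet {P Q : Pref C} {a b : C} :
    (a, b) ∈ invSet P Q ↔ P a < P b ∧ Q b < Q a := by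
  simp [invSet]

lemma invSet_empty_eq (P Q : Pref C) (h : invSet P Q = ∅) : P = Q := by
  have hmono : StrictMono (fun p => Q (P.symm p)) := by
    intro p q hpq
    have hne : P.symm p ≠ P.symm q := fun he => absurd (P.symm.injective he) (ne_of_lt hpq)
    rcases lt_or_gt_of_ne (fun he : Q (P.symm p) = Q (P.symm q) => hne (Q.injective he)) with h' | h'
    · exact h'
    · exfalso
      have : (P.symm p, P.symm q) ∈ invSet P Q := by
        rw [mem_invSet]; simp [hpq, h']
      rw [h] at this; exact absurd this (Finset.notMem_empty _)
  have hsurj : Function.Surjective (fun p => Q (P.symm p)) := (P.symm.trans Q).surjective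
  have he : ∀ p, Q (P.symm p) = p := by
    intro p
    have := Fin.coe_orderIso_apply (StrictMono.orderIsoOfSurjective _ hmono hsurj) p
    exact Fin.ext this
  apply Equiv.ext
  intro c
  have := he (P c)
  simpa using this.symm

lemma invSet_nonempty_adj {P Q : Pref C} (h : (invSet P Q).Nonempty) :
    ∃ a b, (a, b) ∈ invSet P Q ∧ DirAbove P b a := by
  obtain ⟨p, hp, hmin⟩ := Finset.exists_min_image (invSet P Q)
    (fun p => (P p.2 : ℕ) - (P p.1 : ℕ)) h
  obtain ⟨a, b⟩ := p
  rw [mem_invSet] at hp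
  obtain ⟨hab, hQ⟩ := hp
  refine ⟨a, b, mem_invSet.mpr ⟨hab, hQ⟩, ?_⟩
  by_contra hadj
  have h1 : (P a : ℕ) + 1 < (P b : ℕ) := by
    have := (Fin.lt_iff_val_lt_val).mp hab
    unfold DirAbove at hadj
    omega
  have hlt : (P a : ℕ) + 1 < Fintype.card C := lt_trans h1 (P b).isLt
  set c := P.symm ⟨(P a : ℕ) + 1, hlt⟩ with hc
  have hPc : (P c : ℕ) = (P a : ℕ) + 1 := by
    rw [hc, Equiv.apply_symm_apply]
  have hac : P a < P c := by rw [Fin.lt_iff_val_lt_val, hPc]; omega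
  have hcb : P c < P b := by rw [Fin.lt_iff_val_lt_val, hPc]; exact h1
  rcases lt_or_ge (Q c) (Q a) with hq | hq
  · have hmem : (a, c) ∈ invSet P Q := mem_invSet.mpr ⟨hac, hq⟩
    have := hmin (a, c) hmem
    simp only at this
    omega
  · have hq' : Q b < Q c := lt_of_lt_of_le hQ hq
    have hmem : (c, b) ∈ invSet P Q := mem_invSet.mpr ⟨hcb, hq'⟩
    have := hmin (c, b) hmem
    simp only at this
    have hab' := (Fin.lt_iff_val_lt_val).mp hab
    omega

lemma swapIn_apply (P : Pref C) (x y c : C) :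
    swapIn P x y c = P (Equiv.swap x y c) := rfl

lemma invSet_swap_ssubset {P Q : Pref C} {a b : C}
    (hmem : (a, b) ∈ invSet P Q) (hadj : DirAbove P b a) :
    invSet (swapIn P b a) Q ⊂ invSet P Q := by
  rw [mem_invSet] at hmem
  obtain ⟨hab, hQ⟩ := hmem
  have hval : ∀ c : C, (P (Equiv.swap b a c) : ℕ)
      = if c = b then (P a : ℕ) else if c = a then (P b : ℕ) else (P c : ℕ) := by
    intro c; rw [Equiv.swap_apply_def]; split_ifs <;> rfl
  have hinj : ∀ c d : C, c ≠ d → (P c : ℕ) ≠ (P d : ℕ) :=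
    fun c d h hc => h (P.injective (Fin.ext hc))
  have hQv := Fin.lt_iff_val_lt_val.mp hQ
  have habv := Fin.lt_iff_val_lt_val.mp hab
  unfold DirAbove at hadj
  constructor
  · intro p hp
    obtain ⟨u, w⟩ := p
    rw [mem_invSet] at hp ⊢
    obtain ⟨huw, hQuw⟩ := hp
    refine ⟨?_, hQuw⟩
    rw [swapIn_apply, swapIn_apply] at huw
    rw [Fin.lt_iff_val_lt_val] at huw ⊢
    rw [hval u, hval w] at huw
    have hQuwv := Fin.lt_iff_val_lt_val.mp hQuw
    by_cases hub : u = b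
    · rw [if_pos hub] at huw
      have h1 : (P u : ℕ) = (P b : ℕ) := by rw [hub]
      by_cases hwb : w = b
      · rw [if_pos hwb] at huw; omega
      · rw [if_neg hwb] at huw
        by_cases hwa : w = a
        · have hq1 : (Q w : ℕ) = (Q a : ℕ) := by rw [hwa]
          have hq2 : (Q u : ℕ) = (Q b : ℕ) := by rw [hub]
          omega
        · rw [if_neg hwa] at huw
          have h2 := hinj w b hwb
          omega
    · rw [if_neg hub] at huw
      by_cases hua : u = a
      · rw [if_pos hua] at huw
        have h1 : (P u : ℕ) = (P a : ℕ) := by rw [hua]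
        by_cases hwb : w = b
        · rw [if_pos hwb] at huw; omega
        · rw [if_neg hwb] at huw
          by_cases hwa : w = a
          · rw [if_pos hwa] at huw; omega
          · rw [if_neg hwa] at huw; omega
      · rw [if_neg hua] at huw
        by_cases hwb : w = b
        · rw [if_pos hwb] at huw
          have h1 : (P w : ℕ) = (P b : ℕ) := by rw [hwb]
          omega
        · rw [if_neg hwb] at huw
          by_cases hwa : w = a
          · rw [if_pos hwa] at huw
            have h1 : (P w : ℕ) = (P a : ℕ) := by rw [hwa]
            have h2 := hinj u a hua
            omega
          · rw [if_neg hwa] at huw; omega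
  · intro hsub
    have hmem' : (a, b) ∈ invSet (swapIn P b a) Q := hsub (mem_invSet.mpr ⟨hab, hQ⟩)
    rw [mem_invSet] at hmem'
    have h1 := Fin.lt_iff_val_lt_val.mp hmem'.1
    rw [swapIn_apply, swapIn_apply] at h1
    have hne : a ≠ b := fun h => by rw [h] at hab; exact lt_irrefl _ hab
    rw [hval a, hval b] at h1
    rw [if_neg hne, if_pos rfl, if_pos rfl] at h1
    omega

lemma topC_iff [Nonempty C] (P : Pref C) (x : C) :
    topC P = x ↔ (P x : ℕ) = Fintype.card C - 1 := by
  unfold topC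
  rw [Equiv.symm_apply_eq]
  constructor
  · intro h; rw [← h]
  · intro h; exact (Fin.ext h).symm

lemma topC_max [Nonempty C] {P : Pref C} {x : C} (h : topC P = x) (c : C) :
    (P c : ℕ) ≤ (P x : ℕ) := by
  rw [topC_iff] at h
  have := (P c).isLt
  omega

lemma step_lemma [Nonempty C] {n : ℕ} (v : (Fin n → Pref C) → C → ℝ)
    (hpr : PairwiseResponsive v) (x : C) :
    ∀ (k : ℕ) (Pvec : Fin n → Pref C) (i : Fin n) (Q : Pref C),
      (invSet (Pvec i) Q).card ≤ k → topC (Pvec i) = x → topC Q = x →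
      v (Function.update Pvec i Q) x = v Pvec x := by
  intro k
  induction k with
  | zero =>
    intro Pvec i Q hcard htP htQ
    have hempty : invSet (Pvec i) Q = ∅ := Finset.card_eq_zero.mp (Nat.le_zero.mp hcard)
    rw [← invSet_empty_eq _ _ hempty, Function.update_eq_self]
  | succ k ih =>
    intro Pvec i Q hcard htP htQ
    by_cases heq : Pvec i = Q
    · rw [← heq, Function.update_eq_self]
    · have hne : invSet (Pvec i) Q ≠ ∅ := fun h => heq (invSet_empty_eq _ _ h)
      obtain ⟨a, b, hmem, hadj⟩ :=
        invSet_nonempty_adj (Finset.nonempty_iff_ne_empty.mpr hne)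
      rw [mem_invSet] at hmem
      obtain ⟨hab, hQba⟩ := hmem
      have hxa : x ≠ a := by
        rintro rfl
        exact absurd hab (not_lt.mpr (topC_max htP b))
      have hxb : x ≠ b := by
        rintro rfl
        exact absurd hQba (not_lt.mpr (topC_max htQ a))
      set Pvec' := Function.update Pvec i (swapIn (Pvec i) b a) with hP'
      have hswap : v Pvec' x = v Pvec x := hpr Pvec i b a x hadj hxb hxa
      have hP'i : Pvec' i = swapIn (Pvec i) b a := Function.update_self _ _ _
      have hsub : invSet (Pvec' i) Q ⊂ invSet (Pvec i) Q := by
        rw [hP'i]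
        exact invSet_swap_ssubset (mem_invSet.mpr ⟨hab, hQba⟩) hadj
      have hcard' : (invSet (Pvec' i) Q).card ≤ k := by
        have := Finset.card_lt_card hsub
        omega
      have htP' : topC (Pvec' i) = x := by
        rw [topC_iff] at htP ⊢
        rw [hP'i, swapIn_apply, Equiv.swap_apply_of_ne_of_ne hxb hxa]
        exact htP
      have hih := ih Pvec' i Q hcard' htP' htQ
      rw [hP', Function.update_idem] at hih
      rw [hih, hswap]
end Aux

/-- For an anonymous pairwise responsive voting rule, ε-super-weak
unanimity implies ε-strong unanimity. -/
theorem superWeak_implies_strong_unanimity [Fintype C] [Nonempty C] [DecidableEq C]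
    {n : ℕ} (v : (Fin n → Pref C) → C → ℝ) (han : Anonymous v)
    (hpr : PairwiseResponsive v) (ε : ℝ) (hsw : SuperWeakUnanimity ε v) :
    StrongUnanimity ε v := by
  intro x Pvec htop
  obtain ⟨Qvec, hQtop, hQv⟩ := hsw x
  have key : ∀ j : ℕ, v (fun i => if (i : ℕ) < j then Qvec i else Pvec i) x = v Pvec x := by
    intro j
    induction j with
    | zero =>
      have h0 : (fun i : Fin n => if (i : ℕ) < 0 then Qvec i else Pvec i) = Pvec :=
        funext fun i => by simp
      rw [h0]
    | succ j ihj =>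
      by_cases hj : j < n
      · set i0 : Fin n := ⟨j, hj⟩ with hi0
        have heq : (fun i : Fin n => if (i : ℕ) < j + 1 then Qvec i else Pvec i)
            = Function.update (fun i : Fin n => if (i : ℕ) < j then Qvec i else Pvec i)
              i0 (Qvec i0) := by
          funext i
          rcases eq_or_ne i i0 with h | h
          · subst h
            rw [Function.update_self]
            simp [hi0]
          · rw [Function.update_of_ne h]
            have hij : (i : ℕ) ≠ j := fun hc => h (Fin.ext (by simp [hi0, hc]))
            by_cases hlt : (i : ℕ) < j
            · simp [hlt, Nat.lt_succ_of_lt hlt]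
            · simp [hlt, show ¬ (i : ℕ) < j + 1 by omega]
        have htop0 : topC ((fun i : Fin n => if (i : ℕ) < j then Qvec i else Pvec i) i0) = x := by
          by_cases hlt : (i0 : ℕ) < j
          · simp only [hlt, if_pos]; exact hQtop i0
          · simp only [hlt, if_neg, if_false]; exact htop i0
        rw [heq, step_lemma v hpr x _ _ i0 (Qvec i0) le_rfl htop0 (hQtop i0), ihj]
      · have hstep : (fun i : Fin n => if (i : ℕ) < j + 1 then Qvec i else Pvec i)
            = fun i : Fin n => if (i : ℕ) < j then Qvec i else Pvec i := by
          funext i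
          have := i.isLt
          simp [show (i : ℕ) < j by omega, show (i : ℕ) < j + 1 by omega]
        rw [hstep, ihj]
  have hn : (fun i : Fin n => if (i : ℕ) < n then Qvec i else Pvec i) = Qvec :=
    funext fun i => by simp [i.isLt]
  have : v Qvec x = v Pvec x := by rw [← hn, key n]
  linarith
end

section
/- Candidate near-anonymity: let v be an anonymous voting rule on m ≥ 3 candidates that is pairwise responsive, pairwise isolated, and satisfies ε-strong unanimity, and define v'(x,j) = v(x, P⃗^{x,j}) where P⃗^{x,j} is a fixed canonical profile in which exactly the first j voters rank x on top (and the others rank x on the bottom), with the remaining candidates in a fixed order a_1,...,a_m. Then for every pair of candidates x, y and every j ∈ {0,...,n}, |v'(x,j) − v'(y,j)| ≤ 14mε. -/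
open Finset

variable {C : Type*}

/-!
Pairwise responsiveness makes `v z` depend only on which candidates each voter ranks above `z`,
and makes swapping an adjacent pair `x, y` in every ordering preserve `v x + v y`. Let `Z` be the
profile in which the first `j` voters rank `x` first and `y` second and the others rank `x` last
and `y` second to last, and let `Z'` be `Z` with `x` and `y` swapped everywhere. Then
`v'(x,j) - v'(y,j) = v Z x - v Z' y = v Z' x - v Z y`, and in `Z'` (resp. `Z`) the candidate `x`
(resp. `y`) sits directly below a candidate that every voter ranks first or last. Pairwise
isolation and unanimity bound the probability of such a candidate by `2ε`.
-/

open Function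

section Pref

variable [Fintype C] {P Q : Pref C} {a b c x y z : C}

lemma prefOver_iff : PrefOver P a b ↔ (P b : ℕ) < P a := Iff.rfl

lemma Pref.val_ne (h : a ≠ b) : (P a : ℕ) ≠ P b :=
  Fin.val_injective.ne (P.injective.ne h)

lemma not_prefOver_of_val_eq (h : (P z : ℕ) = Fintype.card C - 1) : ¬ PrefOver P c z := by
  have := (P c).isLt
  rw [prefOver_iff]
  omega

lemma prefOver_iff_ne_of_val_eq_zero (h : (P z : ℕ) = 0) : PrefOver P c z ↔ c ≠ z := by
  rw [prefOver_iff, h]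
  refine ⟨fun hc hcz => ?_, fun hcz => ?_⟩
  · subst hcz; omega
  · have := Pref.val_ne (P := P) hcz; omega

lemma ne_of_dirAbove (h : DirAbove P a b) : a ≠ b := by
  rintro rfl; simp [DirAbove] at h

lemma not_prefOver_iff (hab : a ≠ b) : ¬ PrefOver P a b ↔ PrefOver P b a := by
  have := Pref.val_ne (P := P) hab
  rw [prefOver_iff, prefOver_iff]
  omega

lemma topC_eq_of_val_eq [Nonempty C] (h : (P c : ℕ) = Fintype.card C - 1) : topC P = c :=
  P.symm_apply_eq.mpr (Fin.ext h.symm)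

lemma eq_of_forall_dirAbove (h : ∀ a b, DirAbove P a b → PrefOver Q a b) : P = Q := by
  have hmono : StrictMono (P.symm.trans Q) := strictMono_of_lt_succ fun r hr => by
    have hsucc : (r : ℕ) + 1 = Order.succ r :=
      Nat.covBy_iff_add_one_eq.mp (Fin.covBy_iff.mp (Order.covBy_succ_of_not_isMax hr))
    refine h _ _ ?_
    simp [DirAbove, hsucc]
  ext c
  simpa using congrArg Fin.val (hmono.apply_eq (x := P c)).symm

lemma exists_dirAbove_of_ne (h : P ≠ Q) : ∃ a b, DirAbove P a b ∧ PrefOver Q b a := by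
  by_contra! hno
  refine h (eq_of_forall_dirAbove fun a b hab => ?_)
  have := Pref.val_ne (P := Q) (ne_of_dirAbove hab)
  have := hno a b hab
  rw [prefOver_iff] at *
  omega

end Pref

section SwapMove

variable [Fintype C] [DecidableEq C] {P Q : Pref C} {a b c s x y z : C}

@[simp] lemma swapIn_apply_s10 : swapIn P a b c = P (Equiv.swap a b c) := rfl

lemma swapIn_swapIn : swapIn (swapIn P a b) b a = P := by
  ext c; simp [Equiv.swap_comm b a]

lemma swapIn_comm : swapIn P a b = swapIn P b a := by
  ext c; simp [Equiv.swap_comm a b]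

lemma dirAbove_swapIn (h : DirAbove P a b) : DirAbove (swapIn P a b) b a := by
  simp only [DirAbove, swapIn_apply_s10, Equiv.swap_apply_left, Equiv.swap_apply_right] at h ⊢
  omega

/-- Bubble sort: the potential `∑ c, P c * Q c` strictly increases when an adjacent pair of `P`
that is inverted relative to `Q` is swapped, so a counterexample maximizing it cannot exist. -/
theorem swapIn_induction {motive : Pref C → Prop} (hQ : motive Q)
    (step : ∀ P a b, DirAbove P a b → PrefOver Q b a → motive (swapIn P a b) → motive P)
    (P : Pref C) : motive P := by
  let Φ : Pref C → ℤ := fun P => ∑ c, (P c : ℤ) * Q c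
  have hΦ : ∀ P a b, DirAbove P a b → PrefOver Q b a → Φ P < Φ (swapIn P a b) := by
    intro P a b hab hQba
    have hsum : ∑ c, ((swapIn P a b c : ℤ) * Q c - (P c : ℤ) * Q c)
        = ((P b : ℤ) - P a) * Q a + ((P a : ℤ) - P b) * Q b := by
      rw [Fintype.sum_eq_add a b (ne_of_dirAbove hab)]
      · simp only [swapIn_apply_s10, Equiv.swap_apply_left, Equiv.swap_apply_right]
        ring
      · rintro c ⟨hca, hcb⟩
        simp [Equiv.swap_apply_of_ne_of_ne hca hcb]
    rw [Finset.sum_sub_distrib] at hsum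
    simp only [DirAbove, prefOver_iff] at hab hQba
    have : (P a : ℤ) = P b + 1 := by exact_mod_cast hab
    have : (Q a : ℤ) < Q b := by exact_mod_cast hQba
    simp only [Φ]
    nlinarith
  by_contra hP
  have : Nonempty {P // ¬ motive P} := ⟨⟨P, hP⟩⟩
  obtain ⟨⟨P₀, hP₀⟩, hmax⟩ := Finite.exists_max fun P : {P // ¬ motive P} => Φ P
  have hne : P₀ ≠ Q := by rintro rfl; exact hP₀ hQ
  obtain ⟨a, b, hab, hQba⟩ := exists_dirAbove_of_ne hne
  refine hP₀ (step P₀ a b hab hQba (by_contra fun h => ?_))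
  exact (hΦ P₀ a b hab hQba).not_ge (hmax ⟨_, h⟩)

lemma val_moveToBot_self : ((moveToBot P x) x : ℕ) = 0 := by
  simp [moveToBot, Fin.coe_cycleRange_of_le le_rfl]

lemma val_moveToBot_of_ne (h : c ≠ x) :
    ((moveToBot P x) c : ℕ) = if (P c : ℕ) < P x then (P c : ℕ) + 1 else P c := by
  have := Pref.val_ne (P := P) h
  simp only [moveToBot, Equiv.trans_apply]
  split_ifs with hlt
  · exact Fin.coe_cycleRange_of_lt hlt
  · rw [Fin.cycleRange_of_gt (by rw [Fin.lt_def]; omega)]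

lemma val_moveToTop_self : ((moveToTop P x) x : ℕ) = Fintype.card C - 1 := by
  simp [moveToTop, Fin.val_rev, Fin.coe_cycleRange_of_le le_rfl]

lemma val_moveToTop_of_ne (h : c ≠ x) :
    ((moveToTop P x) c : ℕ) = if (P x : ℕ) < P c then (P c : ℕ) - 1 else P c := by
  have := Pref.val_ne (P := P) h
  have := (P c).isLt
  simp only [moveToTop, Equiv.trans_apply, Fin.revPerm_apply, Fin.val_rev]
  split_ifs with hlt
  · rw [Fin.coe_cycleRange_of_lt (by rw [Fin.lt_def]; simp only [Fin.val_rev]; omega)]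
    simp only [Fin.val_rev]; omega
  · rw [Fin.cycleRange_of_gt (by rw [Fin.lt_def]; simp only [Fin.val_rev]; omega)]
    simp only [Fin.val_rev]; omega

lemma moveToBot_eq_self (h : (P x : ℕ) = 0) : moveToBot P x = P := by
  ext c
  rcases eq_or_ne c x with rfl | hcx
  · rw [val_moveToBot_self, h]
  · rw [val_moveToBot_of_ne hcx, h, if_neg (Nat.not_lt_zero _)]

lemma moveToBot_swapIn (h : DirAbove P x b) : moveToBot (swapIn P x b) x = moveToBot P x := by
  have hxb := ne_of_dirAbove h
  ext c
  rcases eq_or_ne c x with rfl | hcx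
  · rw [val_moveToBot_self, val_moveToBot_self]
  have hc := Pref.val_ne (P := P) hcx
  rw [val_moveToBot_of_ne hcx, val_moveToBot_of_ne hcx]
  unfold DirAbove at h
  rcases eq_or_ne c b with rfl | hcb
  · simp only [swapIn_apply_s10, Equiv.swap_apply_left, Equiv.swap_apply_right]
    split_ifs <;> omega
  · have := Pref.val_ne (P := P) hcb
    simp only [swapIn_apply_s10, Equiv.swap_apply_of_ne_of_ne hcx hcb, Equiv.swap_apply_left]
    split_ifs <;> omega

lemma prefOver_swapIn_iff_of_dirAbove (hab : DirAbove P a b) (hza : z ≠ a) (hzb : z ≠ b) :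
    PrefOver (swapIn P a b) c z ↔ PrefOver P c z := by
  have := Pref.val_ne (P := P) hza
  have := Pref.val_ne (P := P) hzb
  unfold DirAbove at hab
  simp only [prefOver_iff, swapIn_apply_s10, Equiv.swap_apply_of_ne_of_ne hza hzb]
  rcases eq_or_ne c a with rfl | hca
  · rw [Equiv.swap_apply_left]; omega
  rcases eq_or_ne c b with rfl | hcb
  · rw [Equiv.swap_apply_right]; omega
  rw [Equiv.swap_apply_of_ne_of_ne hca hcb]

lemma prefOver_of_prefOver_swapIn (hab : DirAbove P a b) (h : PrefOver (swapIn P a b) a c) :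
    PrefOver P a c := by
  unfold DirAbove at hab
  simp only [prefOver_iff, swapIn_apply_s10, Equiv.swap_apply_left] at h ⊢
  rcases eq_or_ne c a with rfl | hca
  · rw [Equiv.swap_apply_left] at h; omega
  rcases eq_or_ne c b with rfl | hcb
  · rw [Equiv.swap_apply_right] at h; omega
  rw [Equiv.swap_apply_of_ne_of_ne hca hcb] at h
  omega

lemma prefOver_moveToTop_iff (ha : a ≠ s) (hb : b ≠ s) :
    PrefOver (moveToTop P s) a b ↔ PrefOver P a b := by
  have := Pref.val_ne (P := P) ha
  have := Pref.val_ne (P := P) hb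
  rw [prefOver_iff, prefOver_iff, val_moveToTop_of_ne ha, val_moveToTop_of_ne hb]
  split_ifs <;> omega

lemma prefOver_moveToTop_iff_of_prefOver (hs : PrefOver P s z) :
    PrefOver (moveToTop P s) c z ↔ PrefOver P c z := by
  have hzs : z ≠ s := by rintro rfl; exact lt_irrefl _ hs
  rcases eq_or_ne c s with rfl | hcs
  · refine iff_of_true ?_ hs
    have := (moveToTop P c z).isLt
    have := Pref.val_ne (P := moveToTop P c) hzs
    rw [prefOver_iff, val_moveToTop_self] at *
    omega
  · exact prefOver_moveToTop_iff hcs hzs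

lemma topC_moveToTop [Nonempty C] : topC (moveToTop P s) = s :=
  topC_eq_of_val_eq val_moveToTop_self

lemma val_moveToTop_moveToTop (hxy : x ≠ y) :
    ((moveToTop (moveToTop P y) x) y : ℕ) = Fintype.card C - 2 := by
  have := Pref.val_ne (P := moveToTop P y) hxy
  have := (moveToTop P y x).isLt
  rw [val_moveToTop_of_ne hxy.symm, val_moveToTop_self] at *
  split_ifs <;> omega

lemma val_moveToBot_moveToBot (hxy : x ≠ y) :
    ((moveToBot (moveToBot P y) x) y : ℕ) = 1 := by
  have := Pref.val_ne (P := moveToBot P y) hxy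
  rw [val_moveToBot_of_ne hxy.symm, val_moveToBot_self] at *
  split_ifs <;> omega

end SwapMove

theorem apply_eq_of_forall_update_eq {ι α β : Type*} [Fintype ι] [DecidableEq ι]
    (Φ : (ι → α) → β) (good : ι → α → Prop) {P Q : ι → α}
    (hP : ∀ k, good k (P k)) (hQ : ∀ k, good k (Q k))
    (h : ∀ R i, (∀ k, good k (R k)) → Φ (update R i (Q i)) = Φ R) : Φ Q = Φ P := by
  have key : ∀ s : Finset ι, Φ (s.piecewise Q P) = Φ P := by
    intro s
    induction s using Finset.induction_on with
    | empty => simp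
    | insert i s _ ih =>
      rw [Finset.piecewise_insert, h _ _ fun k => ?_, ih]
      by_cases hk : k ∈ s <;> simp [hk, hP, hQ]
  simpa using key Finset.univ

section Unanimity

variable [Fintype C] [Nonempty C] {n : ℕ} {v : (Fin n → Pref C) → C → ℝ} {ε : ℝ}
  {P : Fin n → Pref C} {c s : C}

lemma StrongUnanimity.apply_le (hv : IsVotingRule v) (hsu : StrongUnanimity ε v)
    (htop : ∀ k, topC (P k) = s) (hc : c ≠ s) : v P c ≤ ε := by
  have := hsu s P htop
  have := Finset.add_le_sum (fun d _ => hv.1 P d) (mem_univ c) (mem_univ s) hc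
  linarith [hv.2 P]

lemma StrongUnanimity.nonneg (hv : IsVotingRule v) (hsu : StrongUnanimity ε v)
    (e : Pref C) : 0 ≤ ε := by
  have := hsu (topC e) (fun _ => e) fun _ => rfl
  have := Finset.single_le_sum (fun d _ => hv.1 (fun _ => e) d) (mem_univ (topC e))
  linarith [hv.2 fun _ => e]

end Unanimity

section VotingRule

variable [Fintype C] [DecidableEq C] {n : ℕ} {v : (Fin n → Pref C) → C → ℝ} {ε : ℝ}
  {P Q : Fin n → Pref C} {a b c s x y z : C}

lemma PairwiseResponsive.apply_update_eq (hpr : PairwiseResponsive v) {T : Pref C} {i : Fin n}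
    (h : ∀ c, PrefOver (P i) c z ↔ PrefOver T c z) : v (update P i T) z = v P z := by
  suffices ∀ U : Pref C, ∀ P : Fin n → Pref C, P i = U →
      (∀ c, PrefOver U c z ↔ PrefOver T c z) → v (update P i T) z = v P z from this _ _ rfl h
  intro U
  induction U using swapIn_induction (Q := T) with
  | hQ => rintro P rfl -; rw [update_eq_self]
  | step U a b hab hTba ih =>
    rintro P rfl h
    have hza : z ≠ a := by
      rintro rfl
      have := (h b).mpr hTba
      rw [prefOver_iff] at this; unfold DirAbove at hab; omega
    have hzb : z ≠ b := by
      rintro rfl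
      exact lt_asymm hTba ((h a).mp (by rw [prefOver_iff]; unfold DirAbove at hab; omega))
    rw [← hpr P i a b z hab hza hzb, ← ih _ (update_self ..)
      fun c => (prefOver_swapIn_iff_of_dirAbove hab hza hzb).trans (h c), update_idem]

lemma PairwiseResponsive.apply_eq_of_prefOver_iff (hpr : PairwiseResponsive v)
    (h : ∀ k c, PrefOver (P k) c z ↔ PrefOver (Q k) c z) : v P z = v Q z :=
  (apply_eq_of_forall_update_eq (v · z) (fun k T => ∀ c, PrefOver T c z ↔ PrefOver (Q k) c z)
    h (fun _ _ => Iff.rfl) fun _ i hR => hpr.apply_update_eq (hR i)).symm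

lemma PairwiseResponsive.add_apply_update_swapIn (hv : IsVotingRule v)
    (hpr : PairwiseResponsive v) {i : Fin n} (hab : DirAbove (P i) a b) :
    v (update P i (swapIn (P i) a b)) a + v (update P i (swapIn (P i) a b)) b
      = v P a + v P b := by
  have hsum : ∑ c, (v (update P i (swapIn (P i) a b)) c - v P c)
      = (v (update P i (swapIn (P i) a b)) a - v P a)
        + (v (update P i (swapIn (P i) a b)) b - v P b) :=
    Fintype.sum_eq_add a b (ne_of_dirAbove hab) fun c hc => by
      rw [hpr P i a b c hab hc.1 hc.2, sub_self]
  rw [Finset.sum_sub_distrib, hv.2, hv.2] at hsum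
  linarith

lemma PairwiseResponsive.add_apply_swapIn (hv : IsVotingRule v) (hpr : PairwiseResponsive v)
    (hadj : ∀ k, DirAbove (P k) a b ∨ DirAbove (P k) b a) :
    v (fun k => swapIn (P k) a b) a + v (fun k => swapIn (P k) a b) b = v P a + v P b :=
  apply_eq_of_forall_update_eq (fun R => v R a + v R b)
    (fun k T => T = P k ∨ T = swapIn (P k) a b) (fun _ => .inl rfl) (fun _ => .inr rfl)
    fun R i hR => by
      rcases hR i with hRi | hRi
      · rcases hadj i with hab | hba
        · rw [← hRi] at hab ⊢; exact hpr.add_apply_update_swapIn hv hab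
        · rw [← hRi] at hba ⊢
          rw [swapIn_comm, add_comm, add_comm (v R a)]
          exact hpr.add_apply_update_swapIn hv hba
      · rw [← hRi, update_eq_self]

lemma PairwiseIsolated.sub_apply_update_swapIn (hpi : PairwiseIsolated v) {i : Fin n}
    (hab : DirAbove (P i) a b) (hPQ : P i = Q i)
    (h : ∀ k ≠ i, PrefOver (P k) a b ↔ PrefOver (Q k) a b) :
    v P a - v (update P i (swapIn (P i) a b)) a
      = v Q a - v (update Q i (swapIn (Q i) a b)) a := by
  have hab' := ne_of_dirAbove hab
  have key := hpi i (update P i (swapIn (P i) a b)) (update Q i (swapIn (Q i) a b)) b a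
    (by rw [update_self]; exact dirAbove_swapIn hab) (by rw [update_self, update_self, hPQ])
    fun k hk => by
      rw [update_of_ne hk, update_of_ne hk, ← not_prefOver_iff hab', ← not_prefOver_iff hab']
      exact (h k hk).not
  simp only [update_self, update_idem, swapIn_swapIn, update_eq_self] at key
  linarith

lemma PairwiseIsolated.sub_apply_update_moveToBot (hpi : PairwiseIsolated v) {i : Fin n}
    (hPQ : P i = Q i)
    (h : ∀ k ≠ i, ∀ c, PrefOver (P i) x c → (PrefOver (P k) x c ↔ PrefOver (Q k) x c)) :
    v P x - v (update P i (moveToBot (P i) x)) x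
      = v Q x - v (update Q i (moveToBot (Q i) x)) x := by
  obtain ⟨r, hr⟩ : ∃ r, (P i x : ℕ) = r := ⟨_, rfl⟩
  induction r generalizing P Q with
  | zero =>
    simp only [moveToBot_eq_self hr, moveToBot_eq_self (hPQ ▸ hr), update_eq_self, sub_self]
  | succ r ih =>
    set b := (P i).symm ⟨r, by have := (P i x).isLt; omega⟩
    have hb : (P i b : ℕ) = r := by simp [b]
    have hxb : DirAbove (P i) x b := by unfold DirAbove; omega
    have hstep := hpi.sub_apply_update_swapIn hxb hPQ
      fun k hk => h k hk b (by rw [prefOver_iff]; omega)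
    have hnext := ih (P := update P i (swapIn (P i) x b)) (Q := update Q i (swapIn (Q i) x b))
      (by rw [update_self, update_self, hPQ])
      (fun k hk c hc => by
        rw [update_self] at hc
        rw [update_of_ne hk, update_of_ne hk]
        exact h k hk c (prefOver_of_prefOver_swapIn hxb hc))
      (by simp [hb])
    rw [update_self, update_self, update_idem, update_idem, moveToBot_swapIn hxb,
      moveToBot_swapIn (hPQ ▸ hxb)] at hnext
    linarith

lemma PairwiseIsolated.sub_apply_piecewise_moveToBot (hpi : PairwiseIsolated v)
    (S : Finset (Fin n)) {P Q : Fin n → Pref C} (hPQ : ∀ i ∈ S, P i = Q i)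
    (h : ∀ k ∉ S, ∀ i ∈ S, ∀ c, PrefOver (P i) x c → (PrefOver (P k) x c ↔ PrefOver (Q k) x c)) :
    v P x - v (S.piecewise (fun k => moveToBot (P k) x) P) x
      = v Q x - v (S.piecewise (fun k => moveToBot (Q k) x) Q) x := by
  induction S using Finset.induction_on generalizing P Q with
  | empty => simp
  | insert i S hi ih =>
    have hPQi := hPQ i (mem_insert_self i S)
    have hstep := hpi.sub_apply_update_moveToBot hPQi fun k hk c hc => by
      by_cases hkS : k ∈ S
      · rw [hPQ k (mem_insert_of_mem hkS)]
      · exact h k (by simp [hk, hkS]) i (mem_insert_self i S) c hc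
    have hrest := ih (P := update P i (moveToBot (P i) x)) (Q := update Q i (moveToBot (Q i) x))
      (fun k hk => by
        rw [update_of_ne (ne_of_mem_of_not_mem hk hi), update_of_ne (ne_of_mem_of_not_mem hk hi),
          hPQ k (mem_insert_of_mem hk)])
      (fun k hk i' hi' c hc => by
        rw [update_of_ne (ne_of_mem_of_not_mem hi' hi)] at hc
        rcases eq_or_ne k i with rfl | hki
        · rw [update_self, update_self, hPQi]
        · rw [update_of_ne hki, update_of_ne hki]
          exact h k (by simp [hki, hk]) i' (mem_insert_of_mem hi') c hc)
    have hpiece : ∀ R : Fin n → Pref C,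
        S.piecewise (fun k => moveToBot (update R i (moveToBot (R i) x) k) x)
          (update R i (moveToBot (R i) x))
        = (insert i S).piecewise (fun k => moveToBot (R k) x) R := by
      intro R
      ext k : 1
      rcases eq_or_ne k i with rfl | hki
      · simp [hi]
      · by_cases hkS : k ∈ S <;> simp [hkS, hki]
    rw [hpiece, hpiece] at hrest
    linarith

lemma PairwiseResponsive.apply_eq_vTopCount (hpr : PairwiseResponsive v) (e : Pref C) (j : ℕ)
    {P : Fin n → Pref C} (hP : ∀ k, (P k x : ℕ) = if (k : ℕ) < j then Fintype.card C - 1 else 0) :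
    v P x = vTopCount v e x j := by
  refine hpr.apply_eq_of_prefOver_iff fun k c => ?_
  have hPk := hP k
  by_cases hk : (k : ℕ) < j
  · rw [if_pos hk] at hPk
    simp only [canonProfile, if_pos hk]
    exact iff_of_false (not_prefOver_of_val_eq hPk) (not_prefOver_of_val_eq val_moveToTop_self)
  · rw [if_neg hk] at hPk
    simp only [canonProfile, if_neg hk]
    rw [prefOver_iff_ne_of_val_eq_zero hPk, prefOver_iff_ne_of_val_eq_zero val_moveToBot_self]

end VotingRule

section NearAnonymity

variable [Fintype C] [Nonempty C] [DecidableEq C] {n : ℕ} {v : (Fin n → Pref C) → C → ℝ}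
  {ε : ℝ} {x y : C}

/-- Lowering `x` to the bottom for the voters ranking `y` first changes `v x` as it would if the
other voters also ranked `y` first, where unanimity pins it within `ε`; afterwards `x` is unanimously
below a third candidate `s`, pinning `v x` below `ε` again. -/
theorem apply_le_two_mul_of_below_extreme (hm : 3 ≤ Fintype.card C) (hv : IsVotingRule v)
    (hpr : PairwiseResponsive v) (hpi : PairwiseIsolated v) (hsu : StrongUnanimity ε v)
    (hxy : x ≠ y) {P : Fin n → Pref C}
    (hP : ∀ k, ((P k y : ℕ) = Fintype.card C - 1 ∧ (P k x : ℕ) = Fintype.card C - 2) ∨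
      ((P k y : ℕ) = 0 ∧ (P k x : ℕ) = 1)) :
    v P x ≤ 2 * ε := by
  set S := univ.filter fun k => (P k y : ℕ) = Fintype.card C - 1
  have hbot : ∀ k ∉ S, (P k y : ℕ) = 0 ∧ (P k x : ℕ) = 1 := fun k hk =>
    (hP k).resolve_left fun h => hk (mem_filter.mpr ⟨mem_univ k, h.1⟩)
  let Q : Fin n → Pref C := fun k => if k ∈ S then P k else moveToTop (P k) y
  have hphase := hpi.sub_apply_piecewise_moveToBot (x := x) S (P := P) (Q := Q)
    (fun i hi => by simp [Q, hi]) fun k hk i hi c hc => by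
      have hcy : c ≠ y := by
        rintro rfl
        exact not_prefOver_of_val_eq (mem_filter.mp hi).2 hc
      simp only [Q, if_neg hk]
      exact (prefOver_moveToTop_iff hxy hcy).symm
  have hQ : v Q x ≤ ε := hsu.apply_le hv (fun k => by
    by_cases hk : k ∈ S
    · simp only [Q, if_pos hk]
      exact topC_eq_of_val_eq (mem_filter.mp hk).2
    · simp only [Q, if_neg hk]
      exact topC_moveToTop) hxy
  obtain ⟨s, hs, hsy⟩ := Finset.exists_mem_ne (s := univ.erase x)
    (by rw [card_erase_of_mem (mem_univ _), card_univ]; omega) y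
  have hsx := ne_of_mem_erase hs
  have hlowered : v (S.piecewise (fun k => moveToBot (P k) x) P) x ≤ ε := by
    have hsabove : ∀ k, PrefOver (S.piecewise (fun k => moveToBot (P k) x) P k) s x := by
      intro k
      by_cases hk : k ∈ S
      · rw [piecewise_eq_of_mem _ _ _ hk, prefOver_iff_ne_of_val_eq_zero val_moveToBot_self]
        exact hsx
      · rw [piecewise_eq_of_notMem _ _ _ hk, prefOver_iff]
        have := Pref.val_ne (P := P k) hsx
        have := Pref.val_ne (P := P k) hsy
        have := hbot k hk
        omega
    rw [hpr.apply_eq_of_prefOver_iff fun k c => (prefOver_moveToTop_iff_of_prefOver (hsabove k)).symm]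
    exact hsu.apply_le hv (fun k => topC_moveToTop) hsx.symm
  have := hv.1 (S.piecewise (fun k => moveToBot (Q k) x) Q) x
  linarith

theorem abs_vTopCount_sub_le (hm : 3 ≤ Fintype.card C) (hv : IsVotingRule v)
    (hpr : PairwiseResponsive v) (hpi : PairwiseIsolated v) (hsu : StrongUnanimity ε v)
    (e : Pref C) (x y : C) (j : ℕ) :
    |vTopCount v e x j - vTopCount v e y j| ≤ 2 * ε := by
  rcases eq_or_ne x y with rfl | hxy
  · simpa using mul_nonneg zero_le_two (hsu.nonneg hv e)
  let Z : Fin n → Pref C := fun k =>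
    if (k : ℕ) < j then moveToTop (moveToTop e y) x else moveToBot (moveToBot e y) x
  have hZ : ∀ k, ((Z k x : ℕ) = Fintype.card C - 1 ∧ (Z k y : ℕ) = Fintype.card C - 2) ∨
      ((Z k x : ℕ) = 0 ∧ (Z k y : ℕ) = 1) := fun k => by
    by_cases hk : (k : ℕ) < j
    · simp only [Z, if_pos hk]
      exact .inl ⟨val_moveToTop_self, val_moveToTop_moveToTop hxy⟩
    · simp only [Z, if_neg hk]
      exact .inr ⟨val_moveToBot_self, val_moveToBot_moveToBot hxy⟩
  have hZx : ∀ k, (Z k x : ℕ) = if (k : ℕ) < j then Fintype.card C - 1 else 0 := fun k => by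
    by_cases hk : (k : ℕ) < j
    · simp only [Z, if_pos hk, val_moveToTop_self]
    · simp only [Z, if_neg hk, val_moveToBot_self]
  let Zs : Fin n → Pref C := fun k => swapIn (Z k) x y
  have hZs : ∀ k, Zs k x = Z k y ∧ Zs k y = Z k x := fun k => by simp [Zs]
  have hcons : v Zs x + v Zs y = v Z x + v Z y :=
    hpr.add_apply_swapIn hv fun k => by
      unfold DirAbove
      rcases hZ k with h | h <;> omega
  have hx := hpr.apply_eq_vTopCount e j hZx
  have hy := hpr.apply_eq_vTopCount e j (x := y) (P := Zs) fun k => (hZs k).2 ▸ hZx k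
  have hZsx := apply_le_two_mul_of_below_extreme hm hv hpr hpi hsu hxy (P := Zs) fun k => by
    rw [(hZs k).1, (hZs k).2]
    exact hZ k
  have hZy := apply_le_two_mul_of_below_extreme hm hv hpr hpi hsu hxy.symm (P := Z) hZ
  have := hv.1 Zs x
  have := hv.1 Z y
  rw [abs_le]
  constructor <;> linarith

end NearAnonymity

theorem candidate_near_anonymity_general [Fintype C] [Nonempty C] [DecidableEq C] {n : ℕ}
    (hm : 3 ≤ Fintype.card C) (v : (Fin n → Pref C) → C → ℝ)
    (hv : IsVotingRule v) (hpr : PairwiseResponsive v)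
    (hpi : PairwiseIsolated v) (ε : ℝ) (hsu : StrongUnanimity ε v)
    (e : Pref C) (x y : C) (j : ℕ) :
    |vTopCount v e x j - vTopCount v e y j| ≤ 14 * (Fintype.card C : ℝ) * ε := by
  have h := abs_vTopCount_sub_le hm hv hpr hpi hsu e x y j
  have hε := hsu.nonneg hv e
  have hM : (3 : ℝ) ≤ Fintype.card C := by exact_mod_cast hm
  nlinarith

/-- Candidate near-anonymity: `|v'(x,j) − v'(y,j)| ≤ 14mε`. -/
theorem candidate_near_anonymity [Fintype C] [Nonempty C] [DecidableEq C] {n : ℕ}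
    (hm : 3 ≤ Fintype.card C) (v : (Fin n → Pref C) → C → ℝ)
    (hv : IsVotingRule v) (han : Anonymous v) (hpr : PairwiseResponsive v)
    (hpi : PairwiseIsolated v) (ε : ℝ) (hsu : StrongUnanimity ε v)
    (e : Pref C) (x y : C) (j : ℕ) (hj : j ≤ n) :
    |vTopCount v e x j - vTopCount v e y j| ≤ 14 * (Fintype.card C : ℝ) * ε :=
  candidate_near_anonymity_general hm v hv hpr hpi ε hsu e x y j
end

section
/- Abstract near-linearity implies closeness to linear: let n ≥ 1 and let f: {0,...,n} → [0,1] satisfy f(0) ≤ ε, f(n) ≥ 1−ε, and |(f(j+ℓ)−f(j)) − (f(j'+ℓ)−f(j'))| ≤ Kε for all valid j, j', ℓ (with j+ℓ ≤ n, j'+ℓ ≤ n, ℓ ≥ 1). Then there is a constant c (depending only on K, e.g. c = 3K+4 suffices) such that |f(j) − j/n| ≤ cε for all j ∈ {0,...,n}. -/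
open Finset

variable {C : Type*}

/-- Abstract near-linearity implies closeness to linear. -/
theorem near_linear_implies_close_to_linear (K : ℝ) (hK : 0 ≤ K) :
    ∃ c : ℝ, ∀ (n : ℕ), 1 ≤ n → ∀ (ε : ℝ), 0 ≤ ε → ∀ f : ℕ → ℝ,
      (∀ j ≤ n, f j ∈ Set.Icc (0 : ℝ) 1) → f 0 ≤ ε → 1 - ε ≤ f n →
      (∀ j j' ℓ : ℕ, 1 ≤ ℓ → j + ℓ ≤ n → j' + ℓ ≤ n →
        |(f (j + ℓ) - f j) - (f (j' + ℓ) - f j')| ≤ K * ε) →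
      ∀ j ≤ n, |f j - (j : ℝ) / n| ≤ c * ε := by
  refine ⟨3 * K + 5, fun n hn ε hε f hrange h0 h1 hlin j hjn => ?_⟩
  have hn0 : (0:ℝ) < (n:ℝ) := by exact_mod_cast hn
  -- bounds at endpoints
  have hB : |f 0| ≤ ε := by
    have := (hrange 0 (Nat.zero_le n)).1
    rw [abs_of_nonneg this]; exact h0
  have hD : |f n - 1| ≤ ε := by
    have := (hrange n le_rfl).2
    rw [abs_of_nonpos (by linarith)]; linarith
  -- the maximizer
  obtain ⟨m, hm_mem, hm⟩ := Finset.exists_max_image (Finset.range (n+1))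
    (fun i => |f i - (i:ℝ)/n|) ⟨0, Finset.mem_range.mpr (Nat.succ_pos n)⟩
  have hmn : m ≤ n := Nat.lt_succ_iff.mp (Finset.mem_range.mp hm_mem)
  have hjm : |f j - (j:ℝ)/n| ≤ |f m - (m:ℝ)/n| :=
    hm j (Finset.mem_range.mpr (Nat.lt_succ_iff.mpr hjn))
  -- suffices to bound the max
  suffices hmax : |f m - (m:ℝ)/n| ≤ (3*K+5) * ε by linarith
  rcases Nat.eq_zero_or_pos m with rfl | hm1
  · simp only [Nat.cast_zero, zero_div, sub_zero]
    nlinarith [abs_nonneg (f 0)]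
  rcases eq_or_lt_of_le hmn with rfl | hmltn
  · rw [div_self (ne_of_gt hn0)]
    nlinarith [abs_nonneg (f m - 1)]
  -- now 1 ≤ m < n
  by_cases hhalf : m + m ≤ n
  · -- doubling at m
    have hA := hlin m 0 m hm1 hhalf (by omega)
    simp only [Nat.zero_add] at hA
    obtain ⟨hA1, hA2⟩ := abs_le.mp hA
    have hC : |f (m + m) - ((m + m : ℕ):ℝ)/n| ≤ |f m - (m:ℝ)/n| :=
      hm (m + m) (Finset.mem_range.mpr (by omega))
    obtain ⟨hC1, hC2⟩ := abs_le.mp hC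
    push_cast at hC1 hC2
    rw [add_div] at hC1 hC2
    obtain ⟨hB1, hB2⟩ := abs_le.mp hB
    rcases abs_cases (f m - (m:ℝ)/n) with ⟨heq, hp⟩ | ⟨heq, hp⟩ <;> rw [heq] <;>
      rw [heq] at hC1 hC2 <;> linarith
  · -- reflection then doubling at q = n - m
    set q := n - m with hq
    have hq1 : 1 ≤ q := by omega
    have hqm : q + m = n := by omega
    have hqq : q + q ≤ n := by omega
    have hA := hlin 0 q m hm1 (by omega) (by omega)
    rw [hqm] at hA
    simp only [Nat.zero_add] at hA
    obtain ⟨hA1, hA2⟩ := abs_le.mp hA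
    have hE := hlin q 0 q hq1 hqq (by omega)
    simp only [Nat.zero_add] at hE
    obtain ⟨hE1, hE2⟩ := abs_le.mp hE
    have hC : |f (q + q) - ((q + q : ℕ):ℝ)/n| ≤ |f m - (m:ℝ)/n| :=
      hm (q + q) (Finset.mem_range.mpr (by omega))
    obtain ⟨hC1, hC2⟩ := abs_le.mp hC
    have hqr : (q:ℝ) = (n:ℝ) - (m:ℝ) := by
      have : ((q:ℕ):ℝ) = ((n - m : ℕ):ℝ) := by rw [hq]
      rw [this, Nat.cast_sub hmn]
    push_cast at hC1 hC2
    rw [hqr] at hC1 hC2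
    obtain ⟨hB1, hB2⟩ := abs_le.mp hB
    obtain ⟨hD1, hD2⟩ := abs_le.mp hD
    have hdiv : ((n:ℝ) - m)/n = 1 - (m:ℝ)/n := by field_simp
    rw [add_div, hdiv] at hC1 hC2
    rcases abs_cases (f m - (m:ℝ)/n) with ⟨heq, hp⟩ | ⟨heq, hp⟩ <;> rw [heq] <;>
      rw [heq] at hC1 hC2 <;> linarith
end
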